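/- Let B be an n×n symmetric matrix over a field F, let γ ⊆ {1,…,n} with |γ| = k ≤ rank B be such that B[γ] is nonsingular, and let C = B/B[γ] be the Schur complement of B[γ] in B, with indexing inherited from B. Then for every j with 1 ≤ j ≤ n − k: if every quasi-principal minor of B of order j + k is nonzero, then every quasi-principal minor of C of order j is nonzero; and if every quasi-principal minor of B of order j + k is zero, then every quasi-principal minor of C of order j is zero. -/

import Mathlib

open Matrix

/-- The minor of a square matrix `B` lying in the rows indexed by `α` and the columns
indexed by `β` (each listed in increasing order); junk value `0` if `α.card ≠ β.card`. -/
def qMinor {R : Type*} [CommRing R] {m : Type*} [Fintype m] [LinearOrder m]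
    (B : Matrix m m R) (α β : Finset m) : R :=
  if h : β.card = α.card then
    (Matrix.of fun i j : Fin α.card =>
      B (α.orderEmbOfFin rfl i) (β.orderEmbOfFin h j)).det
  else 0

/-- `α` and `β` index a quasi-principal submatrix of order `k`, i.e.
`|α| = |β| = k` and `k - 1 ≤ |α ∩ β| (≤ k)`. -/
def IsQPPair {m : Type*} [DecidableEq m] (k : ℕ) (α β : Finset m) : Prop :=
  α.card = k ∧ β.card = k ∧ k - 1 ≤ (α ∩ β).card

/-- All quasi-principal minors of `B` of order `k` are nonzero. -/
def QPAllNonzero {R : Type*} [CommRing R] {m : Type*} [Fintype m] [LinearOrder m]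
    (B : Matrix m m R) (k : ℕ) : Prop :=
  ∀ α β : Finset m, IsQPPair k α β → qMinor B α β ≠ 0

/-- All quasi-principal minors of `B` of order `k` are zero. -/
def QPAllZero {R : Type*} [CommRing R] {m : Type*} [Fintype m] [LinearOrder m]
    (B : Matrix m m R) (k : ℕ) : Prop :=
  ∀ α β : Finset m, IsQPPair k α β → qMinor B α β = 0

/-- The three possible letters of a qpr-sequence. -/
inductive QPR : Type
  | A
  | S
  | N
deriving DecidableEq

open Classical in
/-- The letter of the qpr-sequence of `B` corresponding to order `k`:
`A` if all quasi-principal minors of order `k` are nonzero, `N` if all are zero,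
and `S` otherwise. -/
noncomputable def qprEntry {R : Type*} [CommRing R] {m : Type*} [Fintype m] [LinearOrder m]
    (B : Matrix m m R) (k : ℕ) : QPR :=
  if QPAllNonzero B k then QPR.A
  else if QPAllZero B k then QPR.N
  else QPR.S

/-- A sequence of letters `q 0, …, q (n-1)` (standing for `q_1 ⋯ q_n`) is attainable
over `F` if it is the qpr-sequence of an `n × n` symmetric matrix over `F`. -/
def Attainable (F : Type*) [Field F] {n : ℕ} (q : Fin n → QPR) : Prop :=
  ∃ B : Matrix (Fin n) (Fin n) F, B.IsSymm ∧ ∀ k : Fin n, qprEntry B ((k : ℕ) + 1) = q k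

/-- The Schur complement `B/B[γ] = B[γᶜ] - B[γᶜ, γ] B[γ]⁻¹ B[γ, γᶜ]`,
with rows and columns indexed by `γᶜ` (indexing inherited from `B`). -/
noncomputable def schurCompl {R : Type*} [CommRing R] {n : ℕ}
    (B : Matrix (Fin n) (Fin n) R) (γ : Finset (Fin n)) :
    Matrix ↥(γᶜ) ↥(γᶜ) R :=
  B.submatrix (fun i : ↥(γᶜ) => (i : Fin n)) (fun j : ↥(γᶜ) => (j : Fin n)) -
    B.submatrix (fun i : ↥(γᶜ) => (i : Fin n)) (fun j : ↥γ => (j : Fin n)) *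
      (B.submatrix (fun i : ↥γ => (i : Fin n)) fun j : ↥γ => (j : Fin n))⁻¹ *
      B.submatrix (fun i : ↥γ => (i : Fin n)) fun j : ↥(γᶜ) => (j : Fin n)

/-- The `(m+1) × (m+1)` matrix with block form `[[A, x], [yᵀ, b]]`. -/
def borderMat {R : Type*} [CommRing R] {m : ℕ} (A : Matrix (Fin m) (Fin m) R)
    (x y : Fin m → R) (b : R) : Matrix (Fin (m + 1)) (Fin (m + 1)) R :=
  Matrix.of fun i j =>
    if hi : (i : ℕ) < m then
      if hj : (j : ℕ) < m then A ⟨i, hi⟩ ⟨j, hj⟩ else x ⟨i, hi⟩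
    else
      if hj : (j : ℕ) < m then y ⟨j, hj⟩ else b

/-
Bordering the nonsingular block `B[γ]` by the rows `α` and columns `β` of `γᶜ` gives, up to a
permutation of rows and columns, the block matrix `[[B[γ], B[γ, β]], [B[α, γ], B[α, β]]]`.
Schur's determinant formula turns its determinant into `det B[γ] · det (B/B[γ])[α, β]`, so
`det B[γ ∪ α, γ ∪ β]` and `det (B/B[γ])[α, β]` vanish together. Adjoining `γ` to a
quasi-principal pair of order `j` gives a quasi-principal pair of order `j + |γ|`.
-/

theorem Matrix.det_submatrix_equiv_eq_zero_iff {R : Type*} [CommRing R] {m m' : Type*}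
    [DecidableEq m] [Fintype m] [DecidableEq m'] [Fintype m'] (M : Matrix m m R) (e f : m' ≃ m) :
    (M.submatrix e f).det = 0 ↔ M.det = 0 := by
  have hperm : M.submatrix e f = (M.submatrix e e).submatrix id (f.trans e.symm) := by
    ext i j; simp
  rw [hperm, det_permute', det_submatrix_equiv_self]
  rcases Int.units_eq_one_or (Equiv.Perm.sign (f.trans e.symm)) with h | h <;> simp [h]

theorem exists_equiv_comp_eq_of_range_eq {κ ι ι' : Type*} {r : ι → κ} {r' : ι' → κ}
    (hr : Function.Injective r) (hr' : Function.Injective r')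
    (h : Set.range r = Set.range r') : ∃ e : ι' ≃ ι, ∀ i, r (e i) = r' i :=
  ⟨(Equiv.ofInjective r' hr').trans ((Equiv.setCongr h.symm).trans (Equiv.ofInjective r hr).symm),
    fun i => by simp [Equiv.apply_ofInjective_symm hr]⟩

theorem qMinor_eq_zero_iff {R : Type*} [CommRing R] {m ι : Type*} [Fintype m] [LinearOrder m]
    [Fintype ι] [DecidableEq ι] (B : Matrix m m R) {r c : ι → m}
    (hr : Function.Injective r) (hc : Function.Injective c) (α β : Finset m)
    (hα : Set.range r = α) (hβ : Set.range c = β) :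
    qMinor B α β = 0 ↔ (B.submatrix r c).det = 0 := by
  have card_eq {s : Finset m} {g : ι → m} (hg : Function.Injective g) (hs : Set.range g = s) :
      s.card = Fintype.card ι := by
    rw [← Finset.coe_inj.mp (by simpa using hs : ↑(Finset.univ.image g) = (s : Set m)),
      Finset.card_image_of_injective _ hg, Finset.card_univ]
  have hcard : β.card = α.card := (card_eq hc hβ).trans (card_eq hr hα).symm
  obtain ⟨e, he⟩ := exists_equiv_comp_eq_of_range_eq hr (α.orderEmbOfFin rfl).injective
    (by rw [hα, Finset.range_orderEmbOfFin])
  obtain ⟨f, hf⟩ := exists_equiv_comp_eq_of_range_eq hc (β.orderEmbOfFin hcard).injective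
    (by rw [hβ, Finset.range_orderEmbOfFin])
  have hsub : (Matrix.of fun i j : Fin α.card =>
      B (α.orderEmbOfFin rfl i) (β.orderEmbOfFin hcard j)) = (B.submatrix r c).submatrix e f := by
    ext i j
    simp [he, hf]
  rw [qMinor, dif_pos hcard, hsub, det_submatrix_equiv_eq_zero_iff]

theorem IsQPPair.map {m m' : Type*} [DecidableEq m] [DecidableEq m'] {j : ℕ} {α β : Finset m}
    (h : IsQPPair j α β) (e : m ↪ m') : IsQPPair j (α.map e) (β.map e) := by
  obtain ⟨hα, hβ, hαβ⟩ := h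
  exact ⟨by rwa [Finset.card_map], by rwa [Finset.card_map], by rwa [← Finset.map_inter,
    Finset.card_map]⟩

theorem IsQPPair.union_of_disjoint {m : Type*} [DecidableEq m] {j : ℕ} (hj : 1 ≤ j)
    {α β γ : Finset m} (h : IsQPPair j α β) (hα : Disjoint γ α) (hβ : Disjoint γ β) :
    IsQPPair (j + γ.card) (γ ∪ α) (γ ∪ β) := by
  obtain ⟨hαj, hβj, hαβ⟩ := h
  have hγαβ : Disjoint γ (α ∩ β) := hα.mono_right Finset.inter_subset_left
  refine ⟨?_, ?_, ?_⟩
  · rw [Finset.card_union_of_disjoint hα]; omega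
  · rw [Finset.card_union_of_disjoint hβ]; omega
  · rw [← Finset.union_inter_distrib_left, Finset.card_union_of_disjoint hγαβ]; omega

section Bordering

variable {m : Type*} [Fintype m] [DecidableEq m] {γ : Finset m} {ι : Type*}

theorem disjoint_map_subtype_compl (s : Finset ↥(γᶜ)) :
    Disjoint γ (s.map (Function.Embedding.subtype (· ∈ γᶜ))) := by
  rw [Finset.disjoint_left]
  rintro x hx hx'
  obtain ⟨y, -, rfl⟩ := Finset.mem_map.mp hx'
  exact Finset.mem_compl.mp y.2 hx

theorem injective_sumElim_val {g : ι → ↥(γᶜ)} (hg : Function.Injective g) :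
    Function.Injective (Sum.elim ((↑) : γ → m) fun i => (g i : m)) :=
  Subtype.val_injective.sumElim (Subtype.val_injective.comp hg) fun x i hxi =>
    Finset.mem_compl.mp (g i).2 (hxi ▸ x.2)

theorem range_sumElim_val {g : ι → ↥(γᶜ)} {s : Finset ↥(γᶜ)} (hg : Set.range g = s) :
    Set.range (Sum.elim ((↑) : γ → m) fun i => (g i : m)) =
      ↑(γ ∪ s.map (Function.Embedding.subtype (· ∈ γᶜ))) := by
  rw [Set.Sum.elim_range, Subtype.range_coe, Finset.coe_union, Finset.coe_map, ← hg,
    ← Set.range_comp]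
  rfl

end Bordering

section SchurComplement

variable {n : ℕ}

theorem det_submatrix_sumElim_eq_mul_det_schurCompl {R : Type*} [CommRing R]
    (B : Matrix (Fin n) (Fin n) R) (γ : Finset (Fin n))
    (hγ : IsUnit (B.submatrix ((↑) : γ → Fin n) (↑)).det)
    {ι : Type*} [Fintype ι] [DecidableEq ι] (a b : ι → ↥(γᶜ)) :
    (B.submatrix (Sum.elim ((↑) : γ → Fin n) fun i => (a i : Fin n))
      (Sum.elim ((↑) : γ → Fin n) fun i => (b i : Fin n))).det =
      (B.submatrix ((↑) : γ → Fin n) (↑)).det * ((schurCompl B γ).submatrix a b).det := by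
  let := (B.submatrix ((↑) : γ → Fin n) (↑)).invertibleOfIsUnitDet hγ
  have hblocks : B.submatrix (Sum.elim ((↑) : γ → Fin n) fun i => (a i : Fin n))
      (Sum.elim ((↑) : γ → Fin n) fun i => (b i : Fin n)) =
      fromBlocks (B.submatrix (↑) (↑)) (B.submatrix (↑) fun i => (b i : Fin n))
        (B.submatrix (fun i => (a i : Fin n)) (↑))
        (B.submatrix (fun i => (a i : Fin n)) fun i => (b i : Fin n)) := by
    ext (i | i) (j | j) <;> rfl
  rw [hblocks, det_fromBlocks₁₁, invOf_eq_nonsing_inv]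
  rfl

theorem qMinor_schurCompl_eq_zero_iff {F : Type*} [Field F] (B : Matrix (Fin n) (Fin n) F)
    {γ : Finset (Fin n)} (hγ : qMinor B γ γ ≠ 0) {α β : Finset ↥(γᶜ)}
    (hαβ : β.card = α.card) :
    qMinor (schurCompl B γ) α β = 0 ↔
      qMinor B (γ ∪ α.map (Function.Embedding.subtype _))
        (γ ∪ β.map (Function.Embedding.subtype _)) = 0 := by
  have hrange : Set.range ((↑) : γ → Fin n) = γ := Subtype.range_coe
  rw [Ne, qMinor_eq_zero_iff B Subtype.val_injective Subtype.val_injective γ γ hrange hrange]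
    at hγ
  have hα := α.range_orderEmbOfFin rfl
  have hβ := β.range_orderEmbOfFin hαβ
  have ha := (α.orderEmbOfFin rfl).injective
  have hb := (β.orderEmbOfFin hαβ).injective
  rw [qMinor_eq_zero_iff _ ha hb α β hα hβ,
    qMinor_eq_zero_iff B (injective_sumElim_val ha) (injective_sumElim_val hb) _ _
      (range_sumElim_val hα) (range_sumElim_val hβ),
    det_submatrix_sumElim_eq_mul_det_schurCompl B γ (isUnit_iff_ne_zero.mpr hγ), mul_eq_zero,
    or_iff_right hγ]

end SchurComplement

theorem stmt_7_general {F : Type*} [Field F] {n : ℕ} (B : Matrix (Fin n) (Fin n) F)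
    (γ : Finset (Fin n)) (hγ : qMinor B γ γ ≠ 0) :
    ∀ j : ℕ, 1 ≤ j → j ≤ n - γ.card →
      (QPAllNonzero B (j + γ.card) → QPAllNonzero (schurCompl B γ) j) ∧
      (QPAllZero B (j + γ.card) → QPAllZero (schurCompl B γ) j) := by
  intro j hj _
  have bordered {α β : Finset ↥(γᶜ)} (h : IsQPPair j α β) :
      IsQPPair (j + γ.card) (γ ∪ α.map (Function.Embedding.subtype _))
        (γ ∪ β.map (Function.Embedding.subtype _)) :=
    (h.map _).union_of_disjoint hj (disjoint_map_subtype_compl α) (disjoint_map_subtype_compl β)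
  have hcard {α β : Finset ↥(γᶜ)} (h : IsQPPair j α β) : β.card = α.card :=
    h.2.1.trans h.1.symm
  refine ⟨fun hB α β h => ?_, fun hB α β h => ?_⟩
  · rw [Ne, qMinor_schurCompl_eq_zero_iff B hγ (hcard h)]
    exact hB _ _ (bordered h)
  · rw [qMinor_schurCompl_eq_zero_iff B hγ (hcard h)]
    exact hB _ _ (bordered h)

/-- Schur Complement Corollary: if `B` is symmetric, `B[γ]` is nonsingular
with `|γ| = k ≤ rank B`, and `C = B/B[γ]`, then for every `j` with `1 ≤ j ≤ n - k`:
if all quasi-principal minors of `B` of order `j + k` are nonzero then all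
quasi-principal minors of `C` of order `j` are nonzero, and likewise with
"nonzero" replaced by "zero". -/
theorem stmt_7 {F : Type*} [Field F] {n : ℕ} (B : Matrix (Fin n) (Fin n) F)
    (hB : B.IsSymm) (γ : Finset (Fin n)) (hcard : γ.card ≤ B.rank)
    (hγ : qMinor B γ γ ≠ 0) :
    ∀ j : ℕ, 1 ≤ j → j ≤ n - γ.card →
      (QPAllNonzero B (j + γ.card) → QPAllNonzero (schurCompl B γ) j) ∧
      (QPAllZero B (j + γ.card) → QPAllZero (schurCompl B γ) j) :=
  stmt_7_general B γ hγ
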